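/- Let Γ be an M-metrised graph, let f : M → N be a homomorphism of sharp integral commutative monoids, and let D ∈ Div(Γ). Then r(f_*(D)) ≥ r(D), where f_* is the pushforward of divisors along the edge contraction of Γ along f. -/
import Mathlib


noncomputable section
open scoped Classical

/-! ### Groupification of a cancellative additive commutative monoid -/

variable (M : Type) [AddCancelCommMonoid M]

def gpSetoid : Setoid (M × M) where
  r p q := p.1 + q.2 = q.1 + p.2
  iseqv := by
    refine ⟨fun p => rfl, fun h => h.symm, fun {p q r} h1 h2 => ?_⟩
    have key : (p.1 + r.2) + (q.1 + q.2) = (r.1 + p.2) + (q.1 + q.2) := by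
      calc (p.1 + r.2) + (q.1 + q.2) = (p.1 + q.2) + (q.1 + r.2) := by abel
        _ = (q.1 + p.2) + (r.1 + q.2) := by rw [h1, h2]
        _ = (r.1 + p.2) + (q.1 + q.2) := by abel
    exact add_right_cancel key

/-- The groupification `M^gp` of a cancellative commutative monoid `M`:
the quotient of `M × M` by `(a,b) ~ (c,d) ↔ a + d = c + b` (think of `(a,b)` as `a - b`). -/
def Gp : Type := Quotient (gpSetoid M)

namespace Gp

variable {M}

/-- The element `a - b` of `M^gp`. -/
def mk (a b : M) : Gp M := Quotient.mk (gpSetoid M) (a, b)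

instance : Zero (Gp M) := ⟨mk 0 0⟩

instance : Add (Gp M) :=
  ⟨Quotient.map₂ (fun p q => (p.1 + q.1, p.2 + q.2)) (by
    intro p p' hp q q' hq
    show (p.1 + q.1) + (p'.2 + q'.2) = (p'.1 + q'.1) + (p.2 + q.2)
    calc (p.1 + q.1) + (p'.2 + q'.2) = (p.1 + p'.2) + (q.1 + q'.2) := by abel
      _ = (p'.1 + p.2) + (q'.1 + q.2) := by rw [hp, hq]
      _ = (p'.1 + q'.1) + (p.2 + q.2) := by abel)⟩

instance : Neg (Gp M) :=
  ⟨Quotient.map (fun p => (p.2, p.1)) (by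
    intro p p' hp
    show p.2 + p'.1 = p'.2 + p.1
    calc p.2 + p'.1 = p'.1 + p.2 := by abel
      _ = p.1 + p'.2 := hp.symm
      _ = p'.2 + p.1 := by abel)⟩

lemma mk_add_mk (a b c d : M) : mk a b + mk c d = mk (a + c) (b + d) := rfl
lemma neg_mk (a b : M) : -(mk a b) = mk b a := rfl
lemma zero_def : (0 : Gp M) = mk 0 0 := rfl

instance : AddCommGroup (Gp M) where
  add := (· + ·)
  zero := 0
  neg := Neg.neg
  nsmul := nsmulRec
  zsmul := zsmulRec
  add_assoc := by
    intro a b c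
    induction a using Quotient.inductionOn with | h a =>
    induction b using Quotient.inductionOn with | h b =>
    induction c using Quotient.inductionOn with | h c =>
    exact Quotient.sound (by
      show ((a.1 + b.1) + c.1) + (a.2 + (b.2 + c.2)) = (a.1 + (b.1 + c.1)) + ((a.2 + b.2) + c.2)
      abel)
  zero_add := by
    intro a
    induction a using Quotient.inductionOn with | h a =>
    exact Quotient.sound (by
      show (0 + a.1) + a.2 = a.1 + (0 + a.2)
      abel)
  add_zero := by
    intro a
    induction a using Quotient.inductionOn with | h a =>
    exact Quotient.sound (by
      show (a.1 + 0) + a.2 = a.1 + (a.2 + 0)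
      abel)
  neg_add_cancel := by
    intro a
    induction a using Quotient.inductionOn with | h a =>
    exact Quotient.sound (by
      show (a.2 + a.1) + 0 = 0 + (a.1 + a.2)
      abel)
  add_comm := by
    intro a b
    induction a using Quotient.inductionOn with | h a =>
    induction b using Quotient.inductionOn with | h b =>
    exact Quotient.sound (by
      show (a.1 + b.1) + (b.2 + a.2) = (b.1 + a.1) + (a.2 + b.2)
      abel)

/-- The canonical map `M → M^gp`. -/
def of : M →+ Gp M where
  toFun a := mk a 0
  map_zero' := rfl
  map_add' := by
    intro a b
    exact (Quotient.sound (by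
      show (a + b) + (0 + 0) = (a + b) + 0
      abel) : mk (a + b) 0 = mk (a + b) (0 + 0))

/-- Functoriality of groupification: a monoid homomorphism `f : M →+ N` induces
`f^gp : M^gp →+ N^gp`. -/
def map {N : Type} [AddCancelCommMonoid N] (f : M →+ N) : Gp M →+ Gp N where
  toFun := Quotient.map (fun p => (f p.1, f p.2)) (by
    intro p p' hp
    show f p.1 + f p'.2 = f p'.1 + f p.2
    rw [← f.map_add, ← f.map_add, hp])
  map_zero' := by
    show mk (f 0) (f 0) = mk 0 0
    rw [f.map_zero]
  map_add' := by
    intro a b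
    induction a using Quotient.inductionOn with | h a =>
    induction b using Quotient.inductionOn with | h b =>
    show mk (f (a.1 + b.1)) (f (a.2 + b.2)) = mk (f a.1 + f b.1) (f a.2 + f b.2)
    rw [f.map_add, f.map_add]

end Gp

/-- Sharpness: the only invertible element of `M` is `0`. -/
def Sharp : Prop := ∀ a b : M, a + b = 0 → a = 0

/-! ### Monoid-metrised graphs -/

/-- A graph (Definition 2.3 of the paper) together with a metric taking values in the
monoid `M`: `X` is the finite set of vertices and half-edges, `r` sends an element to its
root vertex, `i` is the pairing involution on half-edges, and `l` assigns a length in `M`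
to every half-edge (and `0` to every vertex). -/
structure MGraph where
  X : Type
  [finX : Fintype X]
  r : X → X
  i : X → X
  r_idem : ∀ x, r (r x) = r x
  i_invol : ∀ x, i (i x) = x
  fix_iff : ∀ x, i x = x ↔ r x = x
  l : X → M
  l_i : ∀ x, l (i x) = l x
  l_zero_iff : ∀ x, l x = 0 ↔ i x = x

attribute [instance] MGraph.finX

namespace MGraph

variable {M} (G : MGraph M)

/-- `x` is a vertex iff it is fixed by the involution. -/
def IsVertex (x : G.X) : Prop := G.i x = x

/-- `x` is a half-edge iff it is not fixed by the involution. -/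
def IsHalfEdge (x : G.X) : Prop := G.i x ≠ x

/-- The vertex set of `G`. -/
abbrev V : Type := { x : G.X // G.IsVertex x }

/-- The root of any element of `X` is a vertex. -/
def rv (x : G.X) : G.V := ⟨G.r x, (G.fix_iff (G.r x)).mpr (G.r_idem x)⟩

/-- Two vertices are adjacent if some edge joins them. -/
def Adj (u v : G.V) : Prop := ∃ x, G.IsHalfEdge x ∧ G.rv x = u ∧ G.rv (G.i x) = v

/-- `G` is connected. (All graphs in the paper are assumed connected.) -/
def IsConnected : Prop := Nonempty G.X ∧ ∀ u v : G.V, Relation.ReflTransGen G.Adj u v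

/-- The degree of a divisor `D : V → ℤ`. -/
def degD (D : G.V → ℤ) : ℤ := ∑ v, D v

/-- A divisor is effective if all its coefficients are nonnegative. -/
def Effective (D : G.V → ℤ) : Prop := ∀ v, 0 ≤ D v

/-- `g : V → M^gp` is piecewise linear if, along every half-edge, the difference of the
values of `g` at the two endpoints is an integer multiple of the length of that edge. -/
def IsPL (g : G.V → Gp M) : Prop :=
  ∀ x, G.IsHalfEdge x → ∃ n : ℤ, g (G.rv x) - g (G.rv (G.i x)) = n • Gp.of (G.l x)

/-- The (outgoing) integer slope of `g` along the half-edge `x`. -/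
def slope (g : G.V → Gp M) (x : G.X) : ℤ :=
  if h : ∃ n : ℤ, g (G.rv x) - g (G.rv (G.i x)) = n • Gp.of (G.l x) then h.choose else 0

/-- The Laplacian of a piecewise linear function. -/
def lap (g : G.V → Gp M) : G.V → ℤ :=
  fun v => ∑ x : G.X, if G.IsHalfEdge x ∧ G.r x = v.val then G.slope g x else 0

/-- Principal divisors: those of the form `Δ(g)` for a piecewise linear `g`. -/
def IsPrincipal (D : G.V → ℤ) : Prop := ∃ g, G.IsPL g ∧ G.lap g = D

/-- The rank of a divisor `D`:
`r(D) = max { k : for every effective divisor F of degree k, |D - F| ≠ ∅ }`. -/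
def rank (D : G.V → ℤ) : ℤ :=
  sSup {k : ℤ | ∀ F : G.V → ℤ, G.Effective F → G.degD F = k →
    ∃ E : G.V → ℤ, G.Effective E ∧ G.IsPrincipal (D - F - E)}

/-- The divisorial gonality: the minimal degree of a divisor of rank at least 1. -/
def dgon : ℤ := sInf {d : ℤ | ∃ D : G.V → ℤ, 1 ≤ G.rank D ∧ G.degD D = d}

end MGraph


/-! ### Edge contractions along a monoid homomorphism -/

namespace MGraph

variable {M : Type} [AddCancelCommMonoid M] {N : Type} [AddCancelCommMonoid N]

/-- `c : Γ → Γ'` realises the `N`-metrised graph `Γ'` as the edge contraction of the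
`M`-metrised graph `Γ` along the monoid homomorphism `f : M → N`: all edge lengths are
replaced by their images under `f`, and the edges whose length becomes `0` are contracted
(their endpoints being identified). -/
structure IsEdgeContraction (f : M →+ N) (G : MGraph M) (G' : MGraph N)
    (c : G.X → G'.X) : Prop where
  /-- Every vertex and half-edge of `Γ'` comes from `Γ`. -/
  surj : Function.Surjective c
  /-- `c` commutes with the root maps. -/
  map_r : ∀ x, c (G.r x) = G'.r (c x)
  /-- `c` commutes with the involutions. -/
  map_i : ∀ x, c (G.i x) = G'.i (c x)
  /-- The length of the image of `x` is `f` of the length of `x`. -/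
  map_l : ∀ x, G'.l (c x) = f (G.l x)
  /-- `c x` is a vertex exactly when `x` is a vertex or a contracted half-edge. -/
  vertex_iff : ∀ x, G'.IsVertex (c x) ↔ (G.IsVertex x ∨ f (G.l x) = 0)
  /-- `c` is injective on the non-contracted half-edges. -/
  inj_halfedges : ∀ x y, G'.IsHalfEdge (c x) → c x = c y → x = y
  /-- Two vertices of `Γ` become equal in `Γ'` exactly when they are joined by a chain of
  contracted edges. -/
  vertex_glue : ∀ u v, G.IsVertex u → G.IsVertex v →
    (c u = c v ↔ Relation.ReflTransGen
      (fun a b => ∃ x, G.IsHalfEdge x ∧ f (G.l x) = 0 ∧ G.r x = a ∧ G.r (G.i x) = b) u v)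

namespace IsEdgeContraction

variable {f : M →+ N} {G : MGraph M} {G' : MGraph N} {c : G.X → G'.X}

/-- The induced map on vertices. -/
def cV (hc : IsEdgeContraction f G G' c) : G.V → G'.V :=
  fun v => ⟨c v.val, by
    show G'.i (c v.val) = c v.val
    conv_lhs => rw [← hc.map_i v.val, v.property]⟩

/-- The pushforward of divisors along the edge contraction:
`f_*(D) = ∑_v D(v) · [c(v)]`. -/
def push (hc : IsEdgeContraction f G G' c) (D : G.V → ℤ) : G'.V → ℤ :=
  fun v' => ∑ v : G.V, if hc.cV v = v' then D v else 0

end IsEdgeContraction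

end MGraph

/-! ### Auxiliary lemmas -/

section AuxLemmas

variable {M : Type} [AddCancelCommMonoid M]

lemma Gp.of_inj : Function.Injective (Gp.of : M →+ Gp M) := by
  intro a b h
  have h2 : a + 0 = b + 0 := Quotient.exact h
  simpa using h2

lemma Gp.of_eq_zero {a : M} (h : Gp.of a = 0) : a = 0 :=
  Gp.of_inj (by rw [h, map_zero])

lemma sharp_nsmul (hs : Sharp M) {a : M} {k : ℕ} (hk : k ≠ 0) (h : k • a = 0) : a = 0 := by
  obtain ⟨m, rfl⟩ := Nat.exists_eq_succ_of_ne_zero hk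
  rw [succ_nsmul] at h
  exact hs a (m • a) (by rw [add_comm]; exact h)

lemma sharp_zsmul_of (hs : Sharp M) {a : M} (ha : a ≠ 0) {n : ℤ} (h : n • Gp.of a = 0) :
    n = 0 := by
  by_contra hn
  have key : ∀ m : ℤ, 0 < m → m • Gp.of a = 0 → False := by
    intro m hm hma
    have h1 : (m.toNat : ℤ) • Gp.of a = 0 := by rwa [Int.toNat_of_nonneg hm.le]
    rw [natCast_zsmul] at h1
    have h2 : Gp.of (m.toNat • a) = 0 := by rw [AddMonoidHom.map_nsmul]; exact h1
    exact ha (sharp_nsmul hs (by omega) (Gp.of_eq_zero h2))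
  rcases lt_trichotomy n 0 with h0 | h0 | h0
  · exact key (-n) (by omega) (by rw [neg_zsmul, h, neg_zero])
  · exact hn h0
  · exact key n h0 h

lemma sharp_zsmul_of_cancel (hs : Sharp M) {a : M} (ha : a ≠ 0) {n m : ℤ}
    (h : n • Gp.of a = m • Gp.of a) : n = m := by
  have h2 : (n - m) • Gp.of a = 0 := by rw [sub_zsmul, h]; abel
  have := sharp_zsmul_of hs ha h2
  omega

lemma Gp.map_of {N : Type} [AddCancelCommMonoid N] (f : M →+ N) (a : M) :
    Gp.map f (Gp.of a) = Gp.of (f a) := by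
  show Gp.mk (f a) (f 0) = Gp.mk (f a) 0
  rw [f.map_zero]

namespace MGraph

variable {G : MGraph M}

lemma isHalfEdge_i {x : G.X} (h : G.IsHalfEdge x) : G.IsHalfEdge (G.i x) := by
  intro h2
  rw [G.i_invol] at h2
  exact h h2.symm

lemma l_ne_zero {x : G.X} (h : G.IsHalfEdge x) : G.l x ≠ 0 :=
  fun h0 => h ((G.l_zero_iff x).mp h0)

lemma rv_val (x : G.X) : (G.rv x).val = G.r x := rfl

lemma slope_spec {g : G.V → Gp M} {x : G.X}
    (h : ∃ n : ℤ, g (G.rv x) - g (G.rv (G.i x)) = n • Gp.of (G.l x)) :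
    g (G.rv x) - g (G.rv (G.i x)) = G.slope g x • Gp.of (G.l x) := by
  unfold MGraph.slope
  rw [dif_pos h]
  exact h.choose_spec

lemma slope_unique (hs : Sharp M) {g : G.V → Gp M} {x : G.X} (hx : G.IsHalfEdge x)
    {n : ℤ} (h : g (G.rv x) - g (G.rv (G.i x)) = n • Gp.of (G.l x)) :
    G.slope g x = n := by
  have h2 := slope_spec ⟨n, h⟩
  exact sharp_zsmul_of_cancel hs (l_ne_zero hx) (h2.symm.trans h)

lemma slope_add_slope_i (hs : Sharp M) {g : G.V → Gp M} (hg : G.IsPL g) {x : G.X}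
    (hx : G.IsHalfEdge x) : G.slope g x + G.slope g (G.i x) = 0 := by
  have h1 := slope_spec (hg x hx)
  have h2 := slope_spec (hg (G.i x) (isHalfEdge_i hx))
  rw [G.i_invol, G.l_i] at h2
  have h3 : (G.slope g x + G.slope g (G.i x)) • Gp.of (G.l x) = 0 := by
    rw [add_zsmul, ← h1, ← h2]; abel
  exact sharp_zsmul_of hs (l_ne_zero hx) h3

lemma degD_sub (A B : G.V → ℤ) : G.degD (A - B) = G.degD A - G.degD B := by
  simp [MGraph.degD, Finset.sum_sub_distrib]

lemma degD_nonneg {A : G.V → ℤ} (h : G.Effective A) : 0 ≤ G.degD A :=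
  Finset.sum_nonneg fun v _ => h v

lemma degD_lap (hs : Sharp M) {g : G.V → Gp M} (hg : G.IsPL g) : G.degD (G.lap g) = 0 := by
  unfold MGraph.degD MGraph.lap
  rw [Finset.sum_comm]
  have step : ∀ x : G.X,
      (∑ v : G.V, if G.IsHalfEdge x ∧ G.r x = v.val then G.slope g x else 0)
      = if G.IsHalfEdge x then G.slope g x else 0 := by
    intro x
    rw [Finset.sum_eq_single (G.rv x)]
    · by_cases hx : G.IsHalfEdge x <;> simp [hx, rv_val]
    · intro v _ hv
      rw [if_neg]
      rintro ⟨-, h2⟩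
      exact hv (Subtype.ext h2.symm)
    · simp
  rw [Finset.sum_congr rfl fun x _ => step x]
  refine Finset.sum_ninvolution G.i (fun a => ?_) (fun a hfa => ?_)
    (fun a => Finset.mem_univ _) G.i_invol
  · by_cases hha : G.IsHalfEdge a
    · rw [if_pos hha, if_pos (isHalfEdge_i hha)]
      exact slope_add_slope_i hs hg hha
    · rw [if_neg hha, if_neg (by have h' : G.i a = a := not_not.mp hha; rw [h']; exact hha),
        add_zero]
  · by_cases hha : G.IsHalfEdge a
    · exact hha
    · exact absurd (if_neg hha) hfa

lemma rank_mem_le (hs : Sharp M) (v0 : G.V) (D : G.V → ℤ) {k : ℤ}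
    (hk : ∀ F : G.V → ℤ, G.Effective F → G.degD F = k →
      ∃ E : G.V → ℤ, G.Effective E ∧ G.IsPrincipal (D - F - E)) :
    k ≤ max (G.degD D) 0 := by
  rcases le_or_gt k 0 with h | h
  · exact h.trans (le_max_right _ _)
  · set F : G.V → ℤ := fun v => if v = v0 then k else 0 with hF
    have hFeff : G.Effective F := fun v => by rw [hF]; dsimp only; split <;> omega
    have hFdeg : G.degD F = k := by
      rw [hF]; unfold MGraph.degD; simp [Finset.sum_ite_eq']
    obtain ⟨E, hE, g, hg, hlap⟩ := hk F hFeff hFdeg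
    have h0 := degD_lap hs hg
    rw [hlap, degD_sub, degD_sub, hFdeg] at h0
    have h1 := degD_nonneg hE
    have h2 := le_max_left (G.degD D) 0
    omega

namespace IsEdgeContraction

variable {N : Type} [AddCancelCommMonoid N] {f : M →+ N} {G : MGraph M} {G' : MGraph N}
  {c : G.X → G'.X} (hc : IsEdgeContraction f G G' c)

include hc

lemma cV_surj : Function.Surjective hc.cV := by
  intro v'
  obtain ⟨x, hx⟩ := hc.surj v'.val
  refine ⟨G.rv x, Subtype.ext ?_⟩
  show c (G.r x) = v'.val
  rw [hc.map_r, hx]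
  exact (G'.fix_iff v'.val).mp v'.property

lemma cV_rv (x : G.X) : hc.cV (G.rv x) = G'.rv (c x) := Subtype.ext (hc.map_r x)

lemma isHalfEdge_c {x : G.X} (h : G'.IsHalfEdge (c x)) : G.IsHalfEdge x ∧ f (G.l x) ≠ 0 := by
  have h2 : ¬ (G.IsVertex x ∨ f (G.l x) = 0) := fun h3 => h ((hc.vertex_iff x).mpr h3)
  push_neg at h2
  exact h2

lemma c_isHalfEdge {x : G.X} (h1 : G.IsHalfEdge x) (h2 : f (G.l x) ≠ 0) :
    G'.IsHalfEdge (c x) := by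
  intro hv
  rcases (hc.vertex_iff x).mp hv with h | h
  · exact h1 h
  · exact h2 h

lemma cV_rv_eq_of_contracted {x : G.X} (hx : G.IsHalfEdge x) (hl : f (G.l x) = 0) :
    hc.cV (G.rv x) = hc.cV (G.rv (G.i x)) := by
  refine Subtype.ext ?_
  show c (G.r x) = c (G.r (G.i x))
  exact (hc.vertex_glue (G.r x) (G.r (G.i x)) (G.rv x).property
    (G.rv (G.i x)).property).mpr (Relation.ReflTransGen.single ⟨x, hx, hl, rfl, rfl⟩)

lemma map_g_eq_of_cV_eq {g : G.V → Gp M} (hg : G.IsPL g) {u v : G.V}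
    (h : hc.cV u = hc.cV v) : Gp.map f (g u) = Gp.map f (g v) := by
  have key : ∀ (a b : G.X), Relation.ReflTransGen
      (fun a b => ∃ x, G.IsHalfEdge x ∧ f (G.l x) = 0 ∧ G.r x = a ∧ G.r (G.i x) = b) a b →
      ∀ (ha : G.IsVertex a) (hb : G.IsVertex b),
      Gp.map f (g ⟨a, ha⟩) = Gp.map f (g ⟨b, hb⟩) := by
    intro a b hrel ha
    induction hrel with
    | refl => intro hb; rfl
    | tail h1 h2 ih =>
      intro hb
      obtain ⟨x, hx, hl, hrx, hrix⟩ := h2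
      have hb' : G.IsVertex (G.r x) := (G.rv x).property
      rw [hrx] at hb'
      refine (ih hb').trans ?_
      obtain ⟨n, hn⟩ := hg x hx
      have h3 : Gp.map f (g (G.rv x)) - Gp.map f (g (G.rv (G.i x))) = 0 := by
        rw [← map_sub, hn, map_zsmul, Gp.map_of, hl, map_zero, smul_zero]
      have h4 : G.rv x = ⟨_, hb'⟩ := Subtype.ext hrx
      have h5 : G.rv (G.i x) = ⟨_, hb⟩ := Subtype.ext hrix
      rw [h4, h5] at h3
      exact sub_eq_zero.mp h3
  have hrel := (hc.vertex_glue u.val v.val u.property v.property).mp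
    (congrArg Subtype.val h)
  have := key u.val v.val hrel u.property v.property
  simpa using this

lemma isPL_push {g : G.V → Gp M} (hg : G.IsPL g) {g' : G'.V → Gp N}
    (hg' : ∀ v : G.V, g' (hc.cV v) = Gp.map f (g v)) : G'.IsPL g' := by
  intro x' hx'
  obtain ⟨x, rfl⟩ := hc.surj x'
  obtain ⟨hxh, hxl⟩ := hc.isHalfEdge_c hx'
  refine ⟨G.slope g x, ?_⟩
  have e1 : G'.rv (c x) = hc.cV (G.rv x) := (hc.cV_rv x).symm
  have e2 : G'.rv (G'.i (c x)) = hc.cV (G.rv (G.i x)) := by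
    rw [← hc.map_i]; exact (hc.cV_rv _).symm
  rw [e1, e2, hg', hg', ← map_sub, slope_spec (hg x hxh), map_zsmul, Gp.map_of, ← hc.map_l]

lemma slope_push (hsN : Sharp N) {g : G.V → Gp M} (hg : G.IsPL g) {g' : G'.V → Gp N}
    (hg' : ∀ v : G.V, g' (hc.cV v) = Gp.map f (g v)) {x : G.X}
    (h1 : G.IsHalfEdge x) (h2 : f (G.l x) ≠ 0) :
    G'.slope g' (c x) = G.slope g x := by
  refine slope_unique hsN (hc.c_isHalfEdge h1 h2) ?_
  have e1 : G'.rv (c x) = hc.cV (G.rv x) := (hc.cV_rv x).symm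
  have e2 : G'.rv (G'.i (c x)) = hc.cV (G.rv (G.i x)) := by
    rw [← hc.map_i]; exact (hc.cV_rv _).symm
  rw [e1, e2, hg', hg', ← map_sub, slope_spec (hg x h1), map_zsmul, Gp.map_of, ← hc.map_l]

lemma lap_push (hsM : Sharp M) (hsN : Sharp N) {g : G.V → Gp M} (hg : G.IsPL g)
    {g' : G'.V → Gp N} (hg' : ∀ v : G.V, g' (hc.cV v) = Gp.map f (g v)) (v' : G'.V) :
    G'.lap g' v' = hc.push (G.lap g) v' := by
  have hT : hc.push (G.lap g) v'
      = ∑ x : G.X, if G.IsHalfEdge x ∧ hc.cV (G.rv x) = v' then G.slope g x else 0 := by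
    show (∑ v : G.V, if hc.cV v = v' then G.lap g v else 0) = _
    have h1 : ∀ v : G.V, (if hc.cV v = v' then G.lap g v else 0)
        = ∑ x : G.X, if (G.IsHalfEdge x ∧ G.r x = v.val) ∧ hc.cV v = v'
          then G.slope g x else 0 := by
      intro v
      unfold MGraph.lap
      split_ifs with h <;> simp [h]
    rw [Finset.sum_congr rfl fun v _ => h1 v, Finset.sum_comm]
    refine Finset.sum_congr rfl fun x _ => ?_
    rw [Finset.sum_eq_single (G.rv x)]
    · by_cases h1 : G.IsHalfEdge x <;> by_cases h2 : hc.cV (G.rv x) = v' <;>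
        simp [h1, h2, rv_val]
    · intro v _ hv
      rw [if_neg]
      rintro ⟨⟨-, h2⟩, -⟩
      exact hv (Subtype.ext h2.symm)
    · simp
  have hsplit : (∑ x : G.X, if G.IsHalfEdge x ∧ hc.cV (G.rv x) = v'
        then G.slope g x else 0)
      = (∑ x : G.X, if (G.IsHalfEdge x ∧ hc.cV (G.rv x) = v') ∧ f (G.l x) ≠ 0
          then G.slope g x else 0)
      + (∑ x : G.X, if (G.IsHalfEdge x ∧ hc.cV (G.rv x) = v') ∧ f (G.l x) = 0
          then G.slope g x else 0) := by
    rw [← Finset.sum_add_distrib]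
    refine Finset.sum_congr rfl fun x _ => ?_
    by_cases h1 : G.IsHalfEdge x ∧ hc.cV (G.rv x) = v' <;> by_cases h2 : f (G.l x) = 0 <;>
      simp [h1, h2]
  have hcontr : (∑ x : G.X, if (G.IsHalfEdge x ∧ hc.cV (G.rv x) = v') ∧ f (G.l x) = 0
      then G.slope g x else 0) = 0 := by
    refine Finset.sum_ninvolution G.i (fun a => ?_) (fun a hfa => ?_)
      (fun a => Finset.mem_univ _) G.i_invol
    · by_cases h1 : (G.IsHalfEdge a ∧ hc.cV (G.rv a) = v') ∧ f (G.l a) = 0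
      · obtain ⟨⟨ha, hv⟩, hl⟩ := h1
        have h2 : (G.IsHalfEdge (G.i a) ∧ hc.cV (G.rv (G.i a)) = v') ∧ f (G.l (G.i a)) = 0 :=
          ⟨⟨isHalfEdge_i ha, by rw [← hc.cV_rv_eq_of_contracted ha hl]; exact hv⟩,
            by rw [G.l_i]; exact hl⟩
        rw [if_pos ⟨⟨ha, hv⟩, hl⟩, if_pos h2]
        exact slope_add_slope_i hsM hg ha
      · rw [if_neg h1, if_neg, add_zero]
        rintro ⟨⟨ha, hv⟩, hl⟩
        rw [G.l_i] at hl
        have ha' : G.IsHalfEdge a := G.i_invol a ▸ isHalfEdge_i ha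
        refine h1 ⟨⟨ha', ?_⟩, hl⟩
        rw [hc.cV_rv_eq_of_contracted ha' hl]
        exact hv
    · by_cases h1 : (G.IsHalfEdge a ∧ hc.cV (G.rv a) = v') ∧ f (G.l a) = 0
      · exact h1.1.1
      · exact absurd (if_neg h1) hfa
  have hnc : G'.lap g' v'
      = ∑ x : G.X, if (G.IsHalfEdge x ∧ hc.cV (G.rv x) = v') ∧ f (G.l x) ≠ 0
          then G.slope g x else 0 := by
    show (∑ x' : G'.X, if G'.IsHalfEdge x' ∧ G'.r x' = v'.val then G'.slope g' x' else 0) = _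
    rw [← Finset.sum_filter, ← Finset.sum_filter]
    refine (Finset.sum_bij (fun (x : G.X) _ => c x) ?_ ?_ ?_ ?_).symm
    · intro x hx
      obtain ⟨-, ⟨hHE, hv⟩, hl⟩ := Finset.mem_filter.mp hx
      refine Finset.mem_filter.mpr ⟨Finset.mem_univ _, hc.c_isHalfEdge hHE hl, ?_⟩
      rw [← hc.map_r]
      exact congrArg Subtype.val hv
    · intro x hx y hy hxy
      obtain ⟨-, ⟨hHE, hv⟩, hl⟩ := Finset.mem_filter.mp hx
      exact hc.inj_halfedges x y (hc.c_isHalfEdge hHE hl) hxy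
    · intro x' hx'
      obtain ⟨-, hHE', hr'⟩ := Finset.mem_filter.mp hx'
      obtain ⟨x, rfl⟩ := hc.surj x'
      obtain ⟨h1, h2⟩ := hc.isHalfEdge_c hHE'
      refine ⟨x, Finset.mem_filter.mpr ⟨Finset.mem_univ _, ⟨h1, Subtype.ext ?_⟩, h2⟩, rfl⟩
      show c (G.r x) = v'.val
      rw [hc.map_r]
      exact hr'
    · intro x hx
      obtain ⟨-, ⟨hHE, -⟩, hl⟩ := Finset.mem_filter.mp hx
      exact (hc.slope_push hsN hg hg' hHE hl).symm
  rw [hnc, hT, hsplit, hcontr, add_zero]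

lemma degD_push (A : G.V → ℤ) : G'.degD (hc.push A) = G.degD A := by
  show (∑ v' : G'.V, ∑ v : G.V, if hc.cV v = v' then A v else 0) = ∑ v : G.V, A v
  rw [Finset.sum_comm]
  exact Finset.sum_congr rfl fun v _ => by simp [Finset.sum_ite_eq]

lemma push_sub (A B : G.V → ℤ) : hc.push (A - B) = hc.push A - hc.push B := by
  funext v'
  show (∑ v : G.V, if hc.cV v = v' then (A - B) v else 0)
    = (∑ v : G.V, if hc.cV v = v' then A v else 0)
      - (∑ v : G.V, if hc.cV v = v' then B v else 0)
  rw [← Finset.sum_sub_distrib]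
  refine Finset.sum_congr rfl fun v _ => ?_
  split_ifs <;> simp

end IsEdgeContraction

end MGraph

end AuxLemmas

/-- **Lemma 4.4.** Let `Γ` be an `M`-metrised graph, `f : M → N` a homomorphism of sharp
integral monoids, and `D` a divisor on `Γ`. Then `r(f_*(D)) ≥ r(D)`, where `f_*` is the
pushforward of divisors along the edge contraction of `Γ` along `f`. -/
theorem MGraph.IsEdgeContraction.rank_push_ge (M N : Type) [AddCancelCommMonoid M]
    [AddCancelCommMonoid N] (hsharpM : Sharp M) (hsharpN : Sharp N)
    (G : MGraph M) (G' : MGraph N) (hconn : G.IsConnected)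
    (f : M →+ N) (c : G.X → G'.X) (hc : MGraph.IsEdgeContraction f G G' c)
    (D : G.V → ℤ) :
    G.rank D ≤ G'.rank (hc.push D) := by
  classical
  obtain ⟨⟨x0⟩, -⟩ := hconn
  have hs : ∀ v', hc.cV ((hc.cV_surj v').choose) = v' := fun v' => (hc.cV_surj v').choose_spec
  set s : G'.V → G.V := fun v' => (hc.cV_surj v').choose with hs_def
  unfold MGraph.rank
  refine csSup_le_csSup ?_ ⟨-1, ?_⟩ ?_
  · refine ⟨max (G'.degD (hc.push D)) 0, fun k hk => ?_⟩
    exact MGraph.rank_mem_le hsharpN (hc.cV (G.rv x0)) (hc.push D) hk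
  · intro F hF hdeg
    exact absurd hdeg (by have := MGraph.degD_nonneg hF; omega)
  · intro k hk F' hF'eff hF'deg
    set F : G.V → ℤ := fun v => ∑ v' : G'.V, if s v' = v then F' v' else 0 with hF
    have hFeff : G.Effective F := fun v =>
      Finset.sum_nonneg fun v' _ => by split <;> [exact hF'eff v'; exact le_refl 0]
    have hFpush : hc.push F = F' := by
      funext w'
      show (∑ v : G.V, if hc.cV v = w' then F v else 0) = F' w'
      have h1 : ∀ v : G.V, (if hc.cV v = w' then F v else 0)
          = ∑ v' : G'.V, if s v' = v ∧ hc.cV v = w' then F' v' else 0 := by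
        intro v
        split_ifs with h <;> simp [hF, h]
      rw [Finset.sum_congr rfl fun v _ => h1 v, Finset.sum_comm]
      have h2 : ∀ v' : G'.V,
          (∑ v : G.V, if s v' = v ∧ hc.cV v = w' then F' v' else 0)
          = if v' = w' then F' v' else 0 := by
        intro v'
        rw [Finset.sum_eq_single (s v')]
        · rw [hs v']
          by_cases h : v' = w' <;> simp [h]
        · intro v _ hv
          rw [if_neg]
          rintro ⟨h1, -⟩
          exact hv h1.symm
        · simp
      rw [Finset.sum_congr rfl fun v' _ => h2 v']
      simp [Finset.sum_ite_eq']
    have hFdeg : G.degD F = k := by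
      rw [← hc.degD_push F, hFpush, hF'deg]
    obtain ⟨E, hEeff, g, hgPL, hglap⟩ := hk F hFeff hFdeg
    refine ⟨hc.push E, fun v' =>
      Finset.sum_nonneg fun v _ => by split <;> [exact hEeff v; exact le_refl 0], ?_⟩
    set g' : G'.V → Gp N := fun v' => Gp.map f (g (s v')) with hg'def
    have hg' : ∀ v : G.V, g' (hc.cV v) = Gp.map f (g v) := fun v =>
      hc.map_g_eq_of_cV_eq hgPL (by rw [hs])
    refine ⟨g', hc.isPL_push hgPL hg', ?_⟩
    have hlapeq : G'.lap g' = hc.push (G.lap g) :=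
      funext (hc.lap_push hsharpM hsharpN hgPL hg')
    rw [hlapeq, hglap, hc.push_sub, hc.push_sub, hFpush]

end
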